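/- arXiv:2510.05737 — 2 statements merged into one kernel-verified Lean document; each statement's English description precedes it below -/
import Mathlib

section
/- Let ℓ ≥ 1, 0 ≤ m ≤ ℓ, and let t ≥ 1 be an integer. Then the q-expansion coefficients of the t-th power f_{12ℓ,m}^t of the Miller basis form f_{12ℓ,m} ∈ M_{12ℓ} and of the Miller basis form f_{12tℓ, tm} ∈ M_{12tℓ} agree in all degrees d ≤ tm + (ℓ − m); explicitly, f_{12ℓ,m}^t = q^{tm} + O(q^{ℓ + (t−1)m + 1}) and f_{12tℓ,tm} = q^{tm} + O(q^{tℓ+1}), so both have coefficient δ_{d,tm} for all d ≤ tm + (ℓ − m). -/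
open Complex Polynomial Real MeasureTheory Filter Topology

noncomputable section

/-- `q = e^{2πiz}`. -/
def qexp (z : ℂ) : ℂ := Complex.exp (2 * Real.pi * Complex.I * z)

/-- The normalized Eisenstein series `E_k(z) = (1/2) ∑_{gcd(c,d)=1} (cz+d)^{-k}`,
with the convention `E_0 = 1`. -/
def Eis (k : ℕ) (z : ℂ) : ℂ :=
  if k = 0 then 1
  else (1 / 2) * ∑' p : ℤ × ℤ, if Int.gcd p.1 p.2 = 1 then 1 / ((p.1 : ℂ) * z + (p.2 : ℂ)) ^ k else 0

/-- The modular discriminant `Δ(z) = q ∏_{n ≥ 1} (1 - q^n)^24`, `q = e^{2πiz}`. -/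
def Disc (z : ℂ) : ℂ := qexp z * ∏' n : ℕ, (1 - qexp z ^ (n + 1)) ^ 24

/-- The modular `j`-invariant `j = E₄³ / Δ`. -/
def jinv (z : ℂ) : ℂ := Eis 4 z ^ 3 / Disc z

/-- The coefficient of `q^d` in the Fourier/`q`-expansion of a `1`-periodic function
holomorphic on the upper half-plane, computed at height `1`. -/
def qCoeff (f : ℂ → ℂ) (d : ℤ) : ℂ :=
  ∫ x in (0:ℝ)..1,
    f (x + Complex.I) * Complex.exp (-(2 * Real.pi * Complex.I * d * (x + Complex.I)))

/-- `c_N(d)`: the coefficient of `q^d` in the Laurent expansion of `j^N`. -/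
def cj (N : ℕ) (d : ℤ) : ℂ := qCoeff (fun z => jinv z ^ N) d

/-- `A_n = (1/2π) ∫_{π/2}^{2π/3} j(e^{iθ})^n dθ`. -/
def Acoef (n : ℕ) : ℂ :=
  (1 / (2 * Real.pi)) *
    ∫ θ in (Real.pi / 2)..(2 * Real.pi / 3), jinv (Complex.exp (θ * Complex.I)) ^ n

/-- `B_n = -c_n(0)`, where `c_n(0)` is the coefficient of `q^0` in `j^n`. -/
def Bcoef (n : ℕ) : ℂ := - cj n 0

/-- `C_n(k') = 0` for `k' ∈ {0,4,8}` and `C_n(k') = -1728^n/2` for `k' ∈ {6,10,14}`. -/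
def Ccoef (n k' : ℕ) : ℂ := if k' = 6 ∨ k' = 10 ∨ k' = 14 then -(1728 : ℂ) ^ n / 2 else 0

/-- Real-valued version of `A_n` (recall `j` is real on the arc). -/
def AcoefR (n : ℕ) : ℝ :=
  (1 / (2 * Real.pi)) *
    ∫ θ in (Real.pi / 2)..(2 * Real.pi / 3), (jinv (Complex.exp (θ * Complex.I)) ^ n).re

/-- Real-valued version of `B_n = -c_n(0)` (recall `c_n(0)` is an integer). -/
def BcoefR (n : ℕ) : ℝ := - (cj n 0).re

/-- Real-valued version of `C_n(k')`. -/
def CcoefR (n k' : ℕ) : ℝ := if k' = 6 ∨ k' = 10 ∨ k' = 14 then -(1728 : ℝ) ^ n / 2 else 0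

/-- `f` is the `m`-th element `f_{k,m} = q^m + O(q^{ℓ+1})` of the Miller basis of `M_k`,
`k = 12ℓ + k'`: it is holomorphic on the upper half-plane, weight-`k` modular for
`SL₂(ℤ)`, and has a convergent `q`-expansion whose coefficients in degrees `≤ ℓ`
are `δ_{d,m}`. -/
def IsMillerForm (ℓ k' m : ℕ) (f : ℂ → ℂ) : Prop :=
  (∀ z : ℂ, 0 < z.im → DifferentiableAt ℂ f z) ∧
  (∀ z : ℂ, 0 < z.im → f (z + 1) = f z) ∧
  (∀ z : ℂ, 0 < z.im → f (-1 / z) = z ^ (12 * ℓ + k') * f z) ∧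
  (∃ a : ℕ → ℂ,
    (∀ z : ℂ, 0 < z.im →
      Summable (fun n : ℕ => a n * qexp z ^ n) ∧ f z = ∑' n : ℕ, a n * qexp z ^ n) ∧
    (∀ d : ℕ, d ≤ ℓ → a d = if d = m then 1 else 0))

/-- `F` is the Faber polynomial of `f = f_{k,m}`, `k = 12ℓ + k'`: the monic polynomial
of degree `ℓ - m` with `f = Δ^ℓ ⬝ E_{k'} ⬝ F(j)`. -/
def IsFaber (ℓ k' m : ℕ) (f : ℂ → ℂ) (F : Polynomial ℂ) : Prop :=
  F.Monic ∧ F.natDegree = ℓ - m ∧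
  ∀ z : ℂ, 0 < z.im → f z = Disc z ^ ℓ * Eis k' z * F.eval (jinv z)

/-- The sum of the `n`-th powers of the zeros of `F`, counted with multiplicity. -/
def powerSumRoots (F : Polynomial ℂ) (n : ℕ) : ℂ := (F.roots.map (fun x => x ^ n)).sum

/-- The (finite) solutions of `d_1 + 2 d_2 + ⋯ + n d_n = n` in nonnegative integers,
indexed by `Fin n` (so index `t : Fin n` stands for `d_{t+1}`).  Note any solution
automatically has `d_t ≤ n`. -/
def sols (n : ℕ) : Finset (Fin n → ℕ) :=
  (Fintype.piFinset fun _ : Fin n => Finset.range (n + 1)).filter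
    (fun d => ∑ t : Fin n, ((t : ℕ) + 1) * d t = n)

/-!
Write the `q`-expansion of `f = f_{12ℓ,m}` as a power series `P = X^m (1 + u)`; the Miller
normalisation says exactly that `X^(ℓ+1-m) ∣ u`. Since `u ∣ (1 + u)^t - 1`,
`P^t - X^(tm) = X^(tm) ((1 + u)^t - 1)` is divisible by `X^(tm + ℓ + 1 - m)`. The `q`-expansion
of `f^t` is `P^t` because `q`-expansions multiply by the Cauchy product and are unique (a power
series vanishing on a punctured disc is zero, by isolated zeros). The coefficients of
`f_{12tℓ,tm}` are `δ_{d,tm}` up to degree `tℓ ≥ tm + ℓ - m`.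
-/

open PowerSeries

namespace PowerSeries

variable {𝕜 : Type*} [RCLike 𝕜]

open Finset in
theorem hasSum_coeff_mul_mul_pow {P Q : 𝕜⟦X⟧} {w a b : 𝕜}
    (hP : HasSum (fun n => coeff n P * w ^ n) a) (hQ : HasSum (fun n => coeff n Q * w ^ n) b) :
    HasSum (fun n => coeff n (P * Q) * w ^ n) (a * b) := by
  have hterm : ∀ n, coeff n (P * Q) * w ^ n =
      ∑ kl ∈ antidiagonal n, (coeff kl.1 P * w ^ kl.1) * (coeff kl.2 Q * w ^ kl.2) := by
    intro n
    rw [coeff_mul, sum_mul]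
    refine sum_congr rfl fun kl hkl => ?_
    rw [← mem_antidiagonal.1 hkl, pow_add]
    ring
  have hP' := summable_norm_iff.2 hP.summable
  have hQ' := summable_norm_iff.2 hQ.summable
  simp_rw [hterm, ← hP.tsum_eq, ← hQ.tsum_eq,
    tsum_mul_tsum_eq_tsum_sum_antidiagonal_of_summable_norm hP' hQ']
  exact (summable_norm_sum_mul_antidiagonal_of_summable_norm hP' hQ').of_norm.hasSum

theorem hasSum_coeff_pow_mul_pow {P : 𝕜⟦X⟧} {w a : 𝕜}
    (hP : HasSum (fun n => coeff n P * w ^ n) a) (t : ℕ) :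
    HasSum (fun n => coeff n (P ^ t) * w ^ n) (a ^ t) := by
  induction t with
  | zero =>
    simpa only [pow_zero, coeff_zero_one, mul_one] using
      hasSum_single (f := fun n => coeff n (1 : 𝕜⟦X⟧) * w ^ n) 0
        (fun n hn => by simp [coeff_one, hn])
  | succ t ih => simpa only [pow_succ] using hasSum_coeff_mul_mul_pow ih hP

theorem eq_zero_of_hasSum_coeff_mul_pow_eq_zero {P : 𝕜⟦X⟧} {r : ℝ} (hr : 0 < r)
    (h : ∀ w : 𝕜, w ≠ 0 → ‖w‖ < r → HasSum (fun n => coeff n P * w ^ n) 0) : P = 0 := by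
  set p := FormalMultilinearSeries.ofScalars 𝕜 fun n => coeff n P
  have hp_apply (w : 𝕜) (n : ℕ) : p n (fun _ => w) = coeff n P * w ^ n :=
    FormalMultilinearSeries.ofScalars_apply_eq _ _ _
  have hradius : 0 < p.radius := by
    have hw : ‖((r / 2 : ℝ) : 𝕜)‖ = r / 2 := by
      rw [RCLike.norm_ofReal, abs_of_pos (half_pos hr)]
    have hw0 : ((r / 2 : ℝ) : 𝕜) ≠ 0 := norm_pos_iff.1 (by rw [hw]; exact half_pos hr)
    have hterms := (h _ hw0 (by rw [hw]; exact half_lt_self hr)).summable.tendsto_atTop_zero.norm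
    refine lt_of_lt_of_le ?_ (p.le_radius_of_tendsto (r := (r / 2).toNNReal) (l := 0) ?_)
    · simpa using hr
    · simpa [p, FormalMultilinearSeries.ofScalars_norm, abs_of_pos hr, (half_pos hr).le]
        using hterms
  have hzero : ∀ᶠ w in 𝓝[≠] (0 : 𝕜), p.sum w = 0 := by
    filter_upwards [self_mem_nhdsWithin, nhdsWithin_le_nhds (Metric.ball_mem_nhds 0 hr)]
      with w hw hwr
    simp only [FormalMultilinearSeries.sum, hp_apply]
    exact (h w hw (by simpa using hwr)).tsum_eq
  have hsum := p.hasFPowerSeriesOnBall hradius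
  have hp : p = 0 := hsum.hasFPowerSeriesAt.eq_zero_of_eventually
    (hsum.analyticAt.frequently_zero_iff_eventually_zero.1 hzero.frequently)
  ext n
  simpa using congrFun ((FormalMultilinearSeries.ofScalars_series_eq_zero 𝕜).1 hp) n

theorem X_pow_dvd_sub_X_pow_iff {R : Type*} [CommRing R] {P : R⟦X⟧} {n m : ℕ} :
    X ^ n ∣ P - X ^ m ↔ ∀ d < n, coeff d P = if d = m then 1 else 0 := by
  simp only [X_pow_dvd_iff, map_sub, coeff_X_pow, sub_eq_zero]

end PowerSeries

theorem pow_dvd_pow_sub_pow_mul_of_pow_dvd_sub {R : Type*} [CommRing R] {x p : R} {m n : ℕ}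
    (hmn : m ≤ n) (h : x ^ n ∣ p - x ^ m) (t : ℕ) :
    x ^ (t * m + (n - m)) ∣ p ^ t - x ^ (t * m) := by
  obtain ⟨r, hr⟩ := h
  set y := x ^ (n - m) * r
  have hp : p = x ^ m * (1 + y) := by
    rw [mul_add, mul_one, ← mul_assoc, ← pow_add, Nat.add_sub_cancel' hmn, ← hr, add_sub_cancel]
  have hpt : p ^ t - x ^ (t * m) = x ^ (t * m) * ((1 + y) ^ t - 1 ^ t) := by
    rw [hp, mul_pow, ← pow_mul, mul_comm m t, one_pow, mul_sub, mul_one]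
  rw [hpt, pow_add]
  refine mul_dvd_mul_left _ ((dvd_mul_right _ r).trans ?_)
  simpa using sub_dvd_pow_sub_pow (1 + y) 1 t

theorem exists_im_pos_qexp_eq {w : ℂ} (hw : w ≠ 0) (hw1 : ‖w‖ < 1) :
    ∃ z : ℂ, 0 < z.im ∧ qexp z = w :=
  ⟨_, Function.Periodic.im_invQParam_pos_of_norm_lt_one one_pos hw1 hw, by
    simpa [qexp, Function.Periodic.qParam] using Function.Periodic.qParam_right_inv one_ne_zero hw⟩

def HasQExpansion (f : ℂ → ℂ) (P : ℂ⟦X⟧) : Prop :=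
  ∀ z : ℂ, 0 < z.im → HasSum (fun n => coeff n P * qexp z ^ n) (f z)

theorem hasQExpansion_mk {f : ℂ → ℂ} {a : ℕ → ℂ}
    (h : ∀ z : ℂ, 0 < z.im →
      Summable (fun n : ℕ => a n * qexp z ^ n) ∧ f z = ∑' n : ℕ, a n * qexp z ^ n) :
    HasQExpansion f (PowerSeries.mk a) := fun z hz => by
  simpa only [coeff_mk, (h z hz).2] using (h z hz).1.hasSum

namespace HasQExpansion

variable {f : ℂ → ℂ} {P Q : ℂ⟦X⟧}

theorem pow (hf : HasQExpansion f P) (t : ℕ) : HasQExpansion (fun z => f z ^ t) (P ^ t) :=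
  fun z hz => hasSum_coeff_pow_mul_pow (hf z hz) t

theorem unique (hP : HasQExpansion f P) (hQ : HasQExpansion f Q) : P = Q := by
  refine sub_eq_zero.1 (eq_zero_of_hasSum_coeff_mul_pow_eq_zero one_pos fun w hw hw1 => ?_)
  obtain ⟨z, hz, rfl⟩ := exists_im_pos_qexp_eq hw hw1
  simpa [sub_mul] using (hP z hz).sub (hQ z hz)

end HasQExpansion

theorem IsMillerForm.exists_hasQExpansion {ℓ k' m : ℕ} {f : ℂ → ℂ} (hf : IsMillerForm ℓ k' m f) :
    ∃ P, HasQExpansion f P ∧ PowerSeries.X ^ (ℓ + 1) ∣ P - PowerSeries.X ^ m := by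
  obtain ⟨a, ha, hlow⟩ := hf.2.2.2
  refine ⟨PowerSeries.mk a, hasQExpansion_mk ha, X_pow_dvd_sub_X_pow_iff.2 fun d hd => ?_⟩
  simpa using hlow d (Nat.lt_succ_iff.1 hd)

theorem power_coeffs_agree_general (ℓ m t : ℕ) (hm : m ≤ ℓ) (ht : 1 ≤ t)
    (f g : ℂ → ℂ)
    (hf : IsMillerForm ℓ 0 m f) (hg : IsMillerForm (t * ℓ) 0 (t * m) g)
    (b a : ℕ → ℂ)
    (hb : ∀ z : ℂ, 0 < z.im →
      Summable (fun n : ℕ => b n * qexp z ^ n) ∧ (f z) ^ t = ∑' n : ℕ, b n * qexp z ^ n)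
    (ha : ∀ z : ℂ, 0 < z.im →
      Summable (fun n : ℕ => a n * qexp z ^ n) ∧ g z = ∑' n : ℕ, a n * qexp z ^ n) :
    ∀ d : ℕ, d ≤ t * m + (ℓ - m) →
      b d = a d ∧ b d = if d = t * m then 1 else 0 := by
  obtain ⟨P, hfP, hP⟩ := hf.exists_hasQExpansion
  obtain ⟨Q, hgQ, hQ⟩ := hg.exists_hasQExpansion
  have hb_eq : PowerSeries.mk b = P ^ t := (hasQExpansion_mk hb).unique (hfP.pow t)
  have ha_eq : PowerSeries.mk a = Q := (hasQExpansion_mk ha).unique hgQ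
  have hPt : PowerSeries.X ^ (t * m + (ℓ + 1 - m)) ∣ P ^ t - PowerSeries.X ^ (t * m) :=
    pow_dvd_pow_sub_pow_mul_of_pow_dvd_sub (by omega) hP t
  intro d hd
  have hbd : b d = if d = t * m then 1 else 0 := by
    rw [← coeff_mk d b, hb_eq]
    exact X_pow_dvd_sub_X_pow_iff.1 hPt d (by omega)
  have had : a d = if d = t * m then 1 else 0 := by
    have hdeg : t * m + (ℓ - m) ≤ t * ℓ := by nlinarith [Nat.sub_add_cancel hm]
    rw [← coeff_mk d a, ha_eq]
    exact X_pow_dvd_sub_X_pow_iff.1 hQ d (by omega)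
  exact ⟨hbd.trans had.symm, hbd⟩

/-- For `ℓ ≥ 1`, `0 ≤ m ≤ ℓ`, `t ≥ 1`, the `q`-expansion
coefficients of `f_{12ℓ,m}^t` and of `f_{12tℓ,tm}` agree in all degrees
`d ≤ tm + (ℓ - m)`, and both equal `δ_{d,tm}` there. -/
theorem power_coeffs_agree (ℓ m t : ℕ) (hℓ : 1 ≤ ℓ) (hm : m ≤ ℓ) (ht : 1 ≤ t)
    (f g : ℂ → ℂ)
    (hf : IsMillerForm ℓ 0 m f) (hg : IsMillerForm (t * ℓ) 0 (t * m) g)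
    (b a : ℕ → ℂ)
    (hb : ∀ z : ℂ, 0 < z.im →
      Summable (fun n : ℕ => b n * qexp z ^ n) ∧ (f z) ^ t = ∑' n : ℕ, b n * qexp z ^ n)
    (ha : ∀ z : ℂ, 0 < z.im →
      Summable (fun n : ℕ => a n * qexp z ^ n) ∧ g z = ∑' n : ℕ, a n * qexp z ^ n) :
    ∀ d : ℕ, d ≤ t * m + (ℓ - m) →
      b d = a d ∧ b d = if d = t * m then 1 else 0 :=
  power_coeffs_agree_general ℓ m t hm ht f g hf hg b a hb ha
end
end

section
/- Let ℓ ≥ 1, 0 ≤ m ≤ ℓ, t ≥ 1 an integer, and let 1 ≤ n ≤ ℓ − m. Then the sum of the n-th powers of the zeros (with multiplicity) of the Faber polynomial F_{12tℓ, tm} equals t times the sum of the n-th powers of the zeros (with multiplicity) of the Faber polynomial F_{12ℓ, m}. -/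
open Complex Polynomial Real MeasureTheory Filter Topology

noncomputable section

/-! The polynomial `H = G - F ^ t` satisfies `H(j) Δ^{tℓ} = g - f^t`. The right side is
`q^{tm} + O(q^{tℓ+1}) - (q^m + O(q^{ℓ+1}))^t = O(q^{tm+ℓ-m+1})`, while `j Δ = E₄³ → 1` and
`Δ ≍ q` at `i∞` make the left side exactly of order `q^{tℓ - deg H}`. Hence `deg H` is so small
that `G` and `F^t` share their top `ℓ - m + 1` coefficients, and Newton's identities turn this
into equal power sums of the roots up to exponent `ℓ - m`; the roots of `F^t` are those of `F`,
each repeated `t` times. -/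

open UpperHalfPlane hiding I
open ModularForm EisensteinSeries Asymptotics

local notation "𝕢" => Function.Periodic.qParam

section Asymptotics

variable {𝕜 α : Type*} [NormedField 𝕜] {l : Filter α} {u : α → 𝕜}

theorem le_of_isBigO_pow_pow [l.NeBot] (hu : Tendsto u l (𝓝 0)) (hu₀ : ∀ᶠ a in l, u a ≠ 0)
    {m n : ℕ} (h : (fun a => u a ^ m) =O[l] fun a => u a ^ n) : n ≤ m := by
  by_contra! hmn
  refine isLittleO_irrefl ?_ (h.trans_isLittleO ((isLittleO_pow_pow hmn).comp_tendsto hu))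
  exact (hu₀.mono fun a ha => pow_ne_zero m ha).frequently

theorem isBigO_pow_pow_of_le (hu : Tendsto u l (𝓝 0)) {m n : ℕ} (hmn : m ≤ n) :
    (fun a => u a ^ n) =O[l] fun a => u a ^ m := by
  rcases hmn.eq_or_lt with rfl | hlt
  · exact isBigO_refl _ _
  · exact ((isLittleO_pow_pow hlt).comp_tendsto hu).isBigO

theorem isBigO_pow_succ_sub_pow_succ {x y : α → 𝕜} {k m : ℕ}
    (hxy : (fun a => x a - y a) =O[l] fun a => u a ^ k)
    (hx : x =O[l] fun a => u a ^ m) (hy : y =O[l] fun a => u a ^ m) (t : ℕ) :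
    (fun a => x a ^ (t + 1) - y a ^ (t + 1)) =O[l] fun a => u a ^ (k + m * t) := by
  induction t with
  | zero => simpa using hxy
  | succ t ih =>
    have hsplit : ∀ a, x a ^ (t + 2) - y a ^ (t + 2) =
        x a ^ (t + 1) * (x a - y a) + (x a ^ (t + 1) - y a ^ (t + 1)) * y a := fun a => by ring
    have hexp : ∀ a, u a ^ (k + m * (t + 1)) = u a ^ (m * (t + 1)) * u a ^ k := fun a => by ring
    have hexp' : ∀ a, u a ^ (k + m * (t + 1)) = u a ^ (k + m * t) * u a ^ m := fun a => by ring
    simp only [hsplit]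
    refine IsBigO.add ?_ ?_
    · simpa only [hexp, pow_mul] using (hx.pow (t + 1)).mul hxy
    · simpa only [hexp'] using ih.mul hy

end Asymptotics

theorem tsum_mul_pow_sub_sum_range_isBigO {𝕜 : Type*} [NontriviallyNormedField 𝕜]
    [CompleteSpace 𝕜] (a : ℕ → 𝕜) {w₀ : 𝕜} (hw₀ : w₀ ≠ 0)
    (ha : Summable fun n => a n * w₀ ^ n) (N : ℕ) :
    (fun w => ∑' n, a n * w ^ n - ∑ i ∈ Finset.range N, a i * w ^ i) =O[𝓝 0]
      fun w => w ^ N := by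
  set p := FormalMultilinearSeries.ofScalars 𝕜 a
  have hr : (‖w₀‖₊ : ENNReal) ≤ p.radius := by
    refine p.le_radius_of_tendsto (l := 0) ?_
    simpa [p, FormalMultilinearSeries.ofScalars_norm] using ha.tendsto_atTop_zero.norm
  have hp := (p.hasFPowerSeriesOnBall (lt_of_lt_of_le (by simpa using hw₀) hr)).hasFPowerSeriesAt
  refine isBigO_norm_right.mp ?_
  simpa [p, FormalMultilinearSeries.sum, FormalMultilinearSeries.partialSum,
    FormalMultilinearSeries.ofScalars_apply_eq, mul_comm] using hp.isBigO_sub_partialSum_pow N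

theorem Polynomial.tendsto_eval_mul_pow_natDegree {R α : Type*} [CommSemiring R]
    [TopologicalSpace R] [IsTopologicalSemiring R] {l : Filter α} (P : R[X]) {x δ : α → R}
    {c : R} (hxδ : Tendsto (fun a => x a * δ a) l (𝓝 c)) (hδ : Tendsto δ l (𝓝 0)) :
    Tendsto (fun a => P.eval (x a) * δ a ^ P.natDegree) l
      (𝓝 (P.leadingCoeff * c ^ P.natDegree)) := by
  set d := P.natDegree
  have hsum : ∀ a, P.eval (x a) * δ a ^ d =
      ∑ i ∈ Finset.range (d + 1), P.coeff i * (x a * δ a) ^ i * δ a ^ (d - i) := by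
    intro a
    rw [eval_eq_sum_range, Finset.sum_mul]
    refine Finset.sum_congr rfl fun i hi => ?_
    rw [mul_pow, mul_assoc, mul_assoc, mul_assoc, ← pow_add,
      Nat.add_sub_cancel' (Finset.mem_range_succ_iff.mp hi)]
  have hlim : ∑ i ∈ Finset.range (d + 1), P.coeff i * c ^ i * (0 : R) ^ (d - i) =
      P.leadingCoeff * c ^ d := by
    rw [Finset.sum_range_succ, Finset.sum_eq_zero fun i hi => ?_]
    · simp [d]
    · rw [zero_pow (by have := Finset.mem_range.mp hi; omega), mul_zero]
  simp only [hsum, ← hlim]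
  exact tendsto_finsetSum _ fun i _ => (tendsto_const_nhds.mul (hxδ.pow i)).mul (hδ.pow _)

namespace Multiset

variable {R : Type*} [CommRing R]

theorem psum_eq_mul_esymm_sub_sum (s : Multiset R) {k : ℕ} (hk : 0 < k) :
    (s.map (· ^ k)).sum = (-1) ^ (k + 1) * k * s.esymm k -
      ∑ a ∈ Finset.HasAntidiagonal.antidiagonal k with a.1 ∈ Set.Ioo 0 k,
        (-1) ^ a.1 * s.esymm a.1 * (s.map (· ^ a.2)).sum := by
  set v : Fin s.toList.length → R := s.toList.get
  have hv : Finset.univ.val.map v = s := by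
    rw [Fin.univ_val_map, List.ofFn_get, coe_toList]
  have hpsum : ∀ j, (s.map (· ^ j)).sum = MvPolynomial.aeval v (MvPolynomial.psum _ R j) := by
    intro j
    conv_lhs => rw [← hv, Multiset.map_map]
    simp only [MvPolynomial.psum, map_sum, map_pow, MvPolynomial.aeval_X]
    rfl
  have := congrArg (MvPolynomial.aeval v) (MvPolynomial.psum_eq_mul_esymm_sub_sum _ R k hk)
  simp only [map_sub, map_mul, map_sum, map_pow, map_neg, map_one, map_natCast,
    MvPolynomial.aeval_esymm_eq_multiset_esymm, hv, ← hpsum] at this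
  exact this

theorem sum_map_pow_eq_of_esymm_eq {s t : Multiset R} (hcard : card s = card t) {N : ℕ}
    (h : ∀ j ≤ N, s.esymm j = t.esymm j) {n : ℕ} (hn : n ≤ N) :
    (s.map (· ^ n)).sum = (t.map (· ^ n)).sum := by
  induction n using Nat.strong_induction_on with
  | _ n ih =>
    rcases Nat.eq_zero_or_pos n with rfl | hpos
    · simp [hcard]
    · rw [psum_eq_mul_esymm_sub_sum s hpos, psum_eq_mul_esymm_sub_sum t hpos, h n hn]
      congr 1
      refine Finset.sum_congr rfl fun a ha => ?_
      simp only [Finset.mem_filter, Finset.HasAntidiagonal.mem_antidiagonal, Set.mem_Ioo] at ha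
      rw [h a.1 (by omega), ih a.2 (by omega) (by omega)]

end Multiset

theorem powerSumRoots_eq_of_degree_sub_lt {P Q : ℂ[X]} (hP : P.Monic) (hQ : Q.Monic)
    (hPQ : P.natDegree = Q.natDegree) {N : ℕ} (hN : N ≤ P.natDegree)
    (h : (P - Q).degree < ↑(P.natDegree - N)) {n : ℕ} (hn : n ≤ N) :
    powerSumRoots P n = powerSumRoots Q n := by
  have hcard : ∀ R : ℂ[X], Multiset.card R.roots = R.natDegree := fun R =>
    splits_iff_card_roots.mp (IsAlgClosed.splits R)
  refine Multiset.sum_map_pow_eq_of_esymm_eq (by rw [hcard, hcard, hPQ]) (fun j hj => ?_) hn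
  have hcoeff : P.coeff (P.natDegree - j) = Q.coeff (P.natDegree - j) := by
    rw [← sub_eq_zero, ← coeff_sub]
    exact coeff_eq_zero_of_degree_lt (h.trans_le (by exact_mod_cast Nat.sub_le_sub_left hj _))
  rw [coeff_eq_esymm_roots_of_card (hcard P) (Nat.sub_le _ _),
    hPQ, coeff_eq_esymm_roots_of_card (hcard Q) (Nat.sub_le _ _), hP.leadingCoeff,
    hQ.leadingCoeff, Nat.sub_sub_self (by omega)] at hcoeff
  simpa using hcoeff

theorem powerSumRoots_pow (F : ℂ[X]) (t n : ℕ) :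
    powerSumRoots (F ^ t) n = t * powerSumRoots F n := by
  rw [powerSumRoots, roots_pow, Multiset.map_nsmul, Multiset.sum_nsmul, nsmul_eq_mul,
    powerSumRoots]

theorem ModularForm.tendsto_E_atImInfty {k : ℕ} (hk : 3 ≤ k) (hk₂ : Even k) :
    Tendsto (E hk) atImInfty (𝓝 1) := by
  have h₀ : cuspFunction 1 (E hk) 0 = 1 := by
    simpa [qExpansion_coeff] using E_qExpansion_coeff_zero hk hk₂
  have hc := (ModularFormClass.analyticAt_cuspFunction_zero (E hk) one_pos
    one_mem_strictPeriods_SL).continuousAt.tendsto.comp (qParam_tendsto_atImInfty one_pos)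
  rw [h₀] at hc
  exact hc.congr fun τ => eq_cuspFunction τ one_ne_zero
    (SlashInvariantFormClass.periodic_comp_ofComplex (E hk) one_mem_strictPeriods_SL)

lemma qexp_eq_qParam (z : ℂ) : qexp z = 𝕢 1 z := by
  simp [qexp, Function.Periodic.qParam]

lemma Disc_eq_discriminant (τ : ℍ) : Disc τ = discriminant τ := by
  simp [discriminant_eq_q_prod, Disc, qexp_eq_qParam, eta_q_eq_pow]

lemma Eis_four_eq_E₄ (τ : ℍ) : Eis 4 τ = E₄ τ := by
  have h : E₄ τ = 1 / 2 * ∑' v : gammaSet 1 1 0, eisSummand 4 v τ := rfl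
  rw [h, Eis, if_neg four_ne_zero, tsum_subtype (gammaSet 1 1 0) (fun v => eisSummand 4 v τ),
    ← (finTwoArrowEquiv ℤ).symm.tsum_eq]
  congr 1
  refine tsum_congr fun p => ?_
  simp [Set.indicator, gammaSet_one_mem_iff, eisSummand]

lemma isBigO_qParam_Disc : (fun τ : ℍ => 𝕢 1 τ) =O[atImInfty] fun τ => Disc τ := by
  refine IsBigO.of_norm_left ?_
  simpa [Function.Periodic.norm_qParam, Disc_eq_discriminant, mul_div_assoc] using
    exp_isBigO_discriminant

lemma tendsto_Disc_atImInfty : Tendsto (fun τ : ℍ => Disc τ) atImInfty (𝓝 0) := by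
  simp only [Disc_eq_discriminant]
  exact discriminant_isZeroAtImInfty

lemma tendsto_jinv_mul_Disc_atImInfty :
    Tendsto (fun τ : ℍ => jinv τ * Disc τ) atImInfty (𝓝 1) := by
  have h : ∀ τ : ℍ, jinv τ * Disc τ = E₄ τ ^ 3 := fun τ => by
    rw [jinv, div_mul_cancel₀ _ (by simpa [Disc_eq_discriminant] using discriminant_ne_zero τ),
      Eis_four_eq_E₄]
  simpa [h] using (tendsto_E_atImInfty (k := 4) (by norm_num) (by decide)).pow 3

theorem isBigO_qParam_pow_eval_jinv_mul_Disc_pow {H : ℂ[X]} (hH : H ≠ 0) {e : ℕ}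
    (he : H.natDegree ≤ e) :
    (fun τ : ℍ => 𝕢 1 τ ^ (e - H.natDegree)) =O[atImInfty]
      fun τ => H.eval (jinv τ) * Disc τ ^ e := by
  have hlim := H.tendsto_eval_mul_pow_natDegree tendsto_jinv_mul_Disc_atImInfty
    tendsto_Disc_atImInfty
  rw [one_pow, mul_one] at hlim
  have hone : (fun _ : ℍ => (1 : ℂ)) =O[atImInfty]
      fun τ => H.eval (jinv τ) * Disc τ ^ H.natDegree :=
    (isBigO_const_const 1 (leadingCoeff_ne_zero.mpr hH) _).trans
      ((isEquivalent_const_iff_tendsto (leadingCoeff_ne_zero.mpr hH)).mpr hlim).isBigO_symm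
  have hsplit : ∀ τ : ℍ, H.eval (jinv τ) * Disc τ ^ e =
      H.eval (jinv τ) * Disc τ ^ H.natDegree * Disc τ ^ (e - H.natDegree) := fun τ => by
    rw [mul_assoc, ← pow_add, Nat.add_sub_cancel' he]
  simpa [hsplit] using hone.mul (isBigO_qParam_Disc.pow (e - H.natDegree))

theorem IsMillerForm.isBigO_sub_qParam_pow {ℓ k' m : ℕ} {f : ℂ → ℂ}
    (hf : IsMillerForm ℓ k' m f) (hm : m ≤ ℓ) :
    (fun τ : ℍ => f τ - 𝕢 1 τ ^ m) =O[atImInfty] fun τ => 𝕢 1 τ ^ (ℓ + 1) := by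
  obtain ⟨-, -, -, a, ha, hcoef⟩ := hf
  have hpartial : ∀ w : ℂ, ∑ i ∈ Finset.range (ℓ + 1), a i * w ^ i = w ^ m := fun w => by
    rw [Finset.sum_congr rfl fun i hi => by
      rw [hcoef i (Finset.mem_range_succ_iff.mp hi), ite_mul, one_mul, zero_mul]]
    simp [Finset.sum_ite_eq', Nat.lt_succ_iff.mpr hm]
  have hO := (tsum_mul_pow_sub_sum_range_isBigO a (Complex.exp_ne_zero _) (ha I (by simp)).1
    (ℓ + 1)).comp_tendsto (qParam_tendsto_atImInfty one_pos)
  refine hO.congr_left fun τ => ?_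
  simp only [Function.comp_apply, hpartial, (ha τ τ.im_pos).2, qexp_eq_qParam]

theorem isBigO_sub_pow_of_isMillerForm {ℓ m t k₁ k₂ : ℕ} {f g : ℂ → ℂ} (hm : m ≤ ℓ)
    (ht : 1 ≤ t) (hf : IsMillerForm ℓ k₁ m f) (hg : IsMillerForm (t * ℓ) k₂ (t * m) g) :
    (fun τ : ℍ => g τ - f τ ^ t) =O[atImInfty] fun τ => 𝕢 1 τ ^ (t * m + (ℓ - m) + 1) := by
  obtain ⟨s, rfl⟩ : ∃ s, t = s + 1 := ⟨t - 1, by omega⟩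
  have hq := qParam_tendsto_atImInfty one_pos
  have hsm : (s + 1) * m = m * s + m := by ring
  have hsℓ : (s + 1) * ℓ = s * ℓ + ℓ := by ring
  have hms : m * s ≤ s * ℓ := by rw [mul_comm]; exact Nat.mul_le_mul_left s hm
  have hf' := hf.isBigO_sub_qParam_pow hm
  have hfO : (fun τ : ℍ => f τ) =O[atImInfty] fun τ => 𝕢 1 τ ^ m := by
    simpa using
      (hf'.trans (isBigO_pow_pow_of_le hq (show m ≤ ℓ + 1 by omega))).add (isBigO_refl _ _)
  have hpow := isBigO_pow_succ_sub_pow_succ hf' hfO (isBigO_refl _ _) s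
  have hg' := (hg.isBigO_sub_qParam_pow (Nat.mul_le_mul_left _ hm)).trans
    (isBigO_pow_pow_of_le hq (show (s + 1) * m + (ℓ - m) + 1 ≤ (s + 1) * ℓ + 1 by omega))
  have hsplit : ∀ τ : ℍ, g τ - f τ ^ (s + 1) =
      (g τ - 𝕢 1 τ ^ ((s + 1) * m)) - (f τ ^ (s + 1) - (𝕢 1 τ ^ m) ^ (s + 1)) := fun τ => by
    rw [← pow_mul, mul_comm m]; ring
  simp only [hsplit]
  exact hg'.sub (by rwa [show ℓ + 1 + m * s = (s + 1) * m + (ℓ - m) + 1 by omega] at hpow)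

lemma IsFaber.natDegree_eq_mul_sub {ℓ k' m t : ℕ} {g : ℂ → ℂ} {G : ℂ[X]}
    (hG : IsFaber (t * ℓ) k' (t * m) g G) : G.natDegree = t * (ℓ - m) := by
  rw [hG.2.1, Nat.mul_sub]

theorem degree_sub_pow_lt_of_isFaber {ℓ m t : ℕ} {f g : ℂ → ℂ} {F G : ℂ[X]} (hm : m ≤ ℓ)
    (ht : 1 ≤ t) (hf : IsMillerForm ℓ 0 m f) (hF : IsFaber ℓ 0 m f F)
    (hg : IsMillerForm (t * ℓ) 0 (t * m) g) (hG : IsFaber (t * ℓ) 0 (t * m) g G) :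
    (G - F ^ t).degree < ↑(G.natDegree - (ℓ - m)) := by
  set H := G - F ^ t
  rcases eq_or_ne H 0 with hH | hH
  · simp [hH]
  have hGdeg := hG.natDegree_eq_mul_sub
  have hHdeg : H.natDegree ≤ t * ℓ := by
    refine (natDegree_sub_le _ _).trans (max_le ?_ ?_)
    · rw [hGdeg]; exact Nat.mul_le_mul_left t (Nat.sub_le ℓ m)
    · rw [natDegree_pow, hF.2.1]; exact Nat.mul_le_mul_left t (Nat.sub_le ℓ m)
  have heq : ∀ τ : ℍ, H.eval (jinv τ) * Disc τ ^ (t * ℓ) = g τ - f τ ^ t := fun τ => by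
    rw [hG.2.2 τ τ.im_pos, hF.2.2 τ τ.im_pos]
    simp only [H, Eis, ↓reduceIte, eval_sub, eval_pow]
    ring
  have hexp := le_of_isBigO_pow_pow (qParam_tendsto_atImInfty one_pos)
    (Eventually.of_forall fun τ => Function.Periodic.qParam_ne_zero τ)
    ((isBigO_qParam_pow_eval_jinv_mul_Disc_pow hH hHdeg).trans
      ((isBigO_sub_pow_of_isMillerForm hm ht hf hg).congr_left fun τ => (heq τ).symm))
  rw [degree_eq_natDegree hH, Nat.cast_lt, hGdeg]
  have : t * m + t * (ℓ - m) = t * ℓ := by rw [← Nat.mul_add, Nat.add_sub_cancel' hm]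
  omega

theorem power_sum_scaling_general (ℓ m t n : ℕ) (hm : m ≤ ℓ) (ht : 1 ≤ t)
    (hn2 : n ≤ ℓ - m)
    (f g : ℂ → ℂ) (F G : Polynomial ℂ)
    (hf : IsMillerForm ℓ 0 m f) (hF : IsFaber ℓ 0 m f F)
    (hg : IsMillerForm (t * ℓ) 0 (t * m) g) (hG : IsFaber (t * ℓ) 0 (t * m) g G) :
    powerSumRoots G n = (t : ℂ) * powerSumRoots F n := by
  have hGdeg := hG.natDegree_eq_mul_sub
  have hdeg : G.natDegree = (F ^ t).natDegree := by rw [hGdeg, natDegree_pow, hF.2.1]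
  have hN : ℓ - m ≤ G.natDegree := hGdeg ▸ Nat.le_mul_of_pos_left _ ht
  rw [powerSumRoots_eq_of_degree_sub_lt hG.1 (hF.1.pow t) hdeg hN
    (degree_sub_pow_lt_of_isFaber hm ht hf hF hg hG) hn2, powerSumRoots_pow]

/-- For `ℓ ≥ 1`, `0 ≤ m ≤ ℓ`, `t ≥ 1` and `1 ≤ n ≤ ℓ - m`, the sum
of the `n`-th powers of the zeros (with multiplicity) of the Faber polynomial
`F_{12tℓ,tm}` equals `t` times that of `F_{12ℓ,m}`. -/
theorem power_sum_scaling (ℓ m t n : ℕ) (hℓ : 1 ≤ ℓ) (hm : m ≤ ℓ) (ht : 1 ≤ t)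
    (hn1 : 1 ≤ n) (hn2 : n ≤ ℓ - m)
    (f g : ℂ → ℂ) (F G : Polynomial ℂ)
    (hf : IsMillerForm ℓ 0 m f) (hF : IsFaber ℓ 0 m f F)
    (hg : IsMillerForm (t * ℓ) 0 (t * m) g) (hG : IsFaber (t * ℓ) 0 (t * m) g G) :
    powerSumRoots G n = (t : ℂ) * powerSumRoots F n :=
  power_sum_scaling_general ℓ m t n hm ht hn2 f g F G hf hF hg hG
end
end
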